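/- Let τ : ℝ → ℝ be continuous with τ(x) > 0 for all x, and let L⁰ be the formal operator with diffusion coefficient τ and zero drift, i.e., with regularizations L⁰_n g := (τ_n²/2) g'' where τ_n² := (τ² ∧ n) ∗ Φ_n. Then 𝒟_{L⁰} = C²(ℝ): a function f ∈ C¹(ℝ) is a C¹-generalized solution of L⁰f = ℓ̇ for some ℓ̇ ∈ C⁰(ℝ) if and only if f ∈ C²(ℝ), and in that case ℓ̇ = (τ²/2) f''. -/

import Mathlib

open MeasureTheory Filter Topology Set

noncomputable section

/-- A mollifier: a Schwartz function with total integral one. -/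
def IsMollifier (Φ : SchwartzMap ℝ ℝ) : Prop := (∫ x : ℝ, Φ x) = 1

/-- `Φₙ(x) = n Φ(n x)`. -/
def moll (Φ : SchwartzMap ℝ ℝ) (n : ℕ) (x : ℝ) : ℝ := (n : ℝ) * Φ ((n : ℝ) * x)

/-- Convolution `(f ∗ g)(x) = ∫ f(x − y) g(y) dy`. -/
def convol (f g : ℝ → ℝ) (x : ℝ) : ℝ := ∫ y : ℝ, f (x - y) * g y

/-- `σₙ² = (σ² ∧ n) ∗ Φₙ`. -/
def sigmaSqReg (σ : ℝ → ℝ) (Φ : SchwartzMap ℝ ℝ) (n : ℕ) : ℝ → ℝ :=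
  convol (fun x => min (σ x ^ 2) (n : ℝ)) (moll Φ n)

/-- `bₙ = ((−n) ∨ (b ∧ n)) ∗ Φₙ`. -/
def bReg (b : ℝ → ℝ) (Φ : SchwartzMap ℝ ℝ) (n : ℕ) : ℝ → ℝ :=
  convol (fun x => max (-(n : ℝ)) (min (b x) (n : ℝ))) (moll Φ n)

/-- `x ↦ 2∫₀ˣ bₙ'/σₙ² dy`. -/
def SigmaApprox (σ b : ℝ → ℝ) (Φ : SchwartzMap ℝ ℝ) (n : ℕ) (x : ℝ) : ℝ :=
  2 * ∫ y in (0:ℝ)..x, deriv (bReg b Φ n) y / sigmaSqReg σ Φ n y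

/-- `Σ` exists, with value `Sg`: for every mollifier the approximations converge
uniformly on compact sets to the (mollifier-independent) continuous function `Sg`. -/
def SigmaExists (σ b Sg : ℝ → ℝ) : Prop :=
  Continuous Sg ∧
    ∀ Φ : SchwartzMap ℝ ℝ, IsMollifier Φ →
      TendstoLocallyUniformly (fun n => SigmaApprox σ b Φ n) Sg atTop

/-- The regularized operator `Lₙ g = (σₙ²/2) g'' + bₙ' g'`. -/
def Lreg (σ b : ℝ → ℝ) (Φ : SchwartzMap ℝ ℝ) (n : ℕ) (g : ℝ → ℝ) (x : ℝ) : ℝ :=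
  sigmaSqReg σ Φ n x / 2 * deriv (deriv g) x + deriv (bReg b Φ n) x * deriv g x

/-- `f` is a `C¹`-generalized solution of `L f = ℓ`. -/
def IsC1GenSolution (σ b f ℓ : ℝ → ℝ) : Prop :=
  ContDiff ℝ 1 f ∧ Continuous ℓ ∧
    ∀ Φ : SchwartzMap ℝ ℝ, IsMollifier Φ →
      ∃ fn : ℕ → ℝ → ℝ,
        (∀ n, ContDiff ℝ 2 (fn n)) ∧
        (∀ n, Continuous (Lreg σ b Φ n (fn n))) ∧
        TendstoLocallyUniformly fn f atTop ∧
        TendstoLocallyUniformly (fun n => deriv (fn n)) (deriv f) atTop ∧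
        TendstoLocallyUniformly (fun n => Lreg σ b Φ n (fn n)) ℓ atTop

/-- `h(x) = ∫₀ˣ e^{−Σ(y)} dy`, i.e. `h(0) = 0`, `h' = e^{−Σ}`. -/
def hFun (Sg : ℝ → ℝ) (x : ℝ) : ℝ := ∫ y in (0:ℝ)..x, Real.exp (-Sg y)


/-!
With zero drift, `L⁰ₙ fₙ = (τₙ²/2) fₙ''`. Since `τₙ² → τ² > 0` locally uniformly, the second
derivatives `fₙ'' = 2 L⁰ₙ fₙ / τₙ²` converge locally uniformly to `2ℓ̇/τ²`, so the limit `f'` of the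
`fₙ'` is differentiable with that continuous derivative. Conversely, for `f ∈ C²` the constant
sequence `fₙ = f` works.

For a continuous limit, locally uniform convergence is the same as continuous convergence
`Fₙ(yₙ) → F(x)` for `yₙ → x`, which turns the limit algebra into `Tendsto.mul`/`Tendsto.div`.
After the substitution `z = n y`, `τₙ²(yₙ) = ∫ (τ²(yₙ - z/n) ∧ n) Φ(z) dz`, and dominated convergence
applies with the bound `(C + |z|) |Φ(z)|`: the truncation at `n` is what controls `|z| > n`.
-/

theorem tendstoLocallyUniformly_iff_tendsto_uncurry {ι α β : Type*} [TopologicalSpace α]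
    [UniformSpace β] {F : ι → α → β} {f : α → β} {p : Filter ι} (hf : Continuous f) :
    TendstoLocallyUniformly F f p ↔
      ∀ x, Tendsto (fun q : ι × α => F q.1 q.2) (p ×ˢ 𝓝 x) (𝓝 (f x)) := by
  rw [tendstoLocallyUniformly_iff_forall_tendsto]
  refine forall_congr' fun x => ?_
  have hfx : Tendsto (fun q : ι × α => (f x, f q.2)) (p ×ˢ 𝓝 x) (uniformity β) :=
    Uniform.tendsto_nhds_right.1 ((hf.tendsto x).comp tendsto_snd)
  rw [Uniform.tendsto_nhds_right]
  exact ⟨hfx.uniformity_trans, hfx.uniformity_symm.uniformity_trans⟩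

theorem tendstoLocallyUniformly_const {ι α β : Type*} [TopologicalSpace α] [UniformSpace β]
    (f : α → β) (p : Filter ι) : TendstoLocallyUniformly (fun _ : ι => f) f p :=
  fun _ hu _ => ⟨univ, univ_mem, Eventually.of_forall fun _ _ _ => refl_mem_uniformity hu⟩

theorem exists_isMollifier : ∃ Φ : SchwartzMap ℝ ℝ, IsMollifier Φ :=
  let b : ContDiffBump (0 : ℝ) := ⟨1, 2, one_pos, one_lt_two⟩
  ⟨b.hasCompactSupport_normed.toSchwartzMap b.contDiff_normed, b.integral_normed⟩

theorem integrable_moll (Φ : SchwartzMap ℝ ℝ) (n : ℕ) : Integrable (moll Φ n) := by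
  unfold moll
  rcases eq_or_ne (n : ℝ) 0 with hn | hn
  · simp [hn]
  · exact (Φ.integrable.comp_mul_left' hn).const_mul _

theorem continuous_convol {f g : ℝ → ℝ} (hf : Continuous f)
    (hfb : BddAbove (range fun x => ‖f x‖)) (hg : Integrable g) : Continuous (convol f g) := by
  have : convol f g = convolution g f (ContinuousLinearMap.mul ℝ ℝ) := by
    funext x
    simp only [convol, convolution, ContinuousLinearMap.mul_apply', mul_comm]
  rw [this]
  exact hfb.continuous_convolution_right_of_integrable _ hg hf

theorem convol_moll_eq (f : ℝ → ℝ) (Φ : SchwartzMap ℝ ℝ) {n : ℕ} (hn : n ≠ 0) (x : ℝ) :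
    convol f (moll Φ n) x = ∫ z, f (x - z / n) * Φ z := by
  have hn' : (n : ℝ) ≠ 0 := Nat.cast_ne_zero.2 hn
  calc convol f (moll Φ n) x = ∫ y, (n : ℝ) * (fun z => f (x - z / n) * Φ z) (n * y) := by
        simp only [convol, moll]
        congr with y
        rw [mul_div_cancel_left₀ _ hn']
        ring
    _ = ∫ z, f (x - z / n) * Φ z := by
        rw [integral_const_mul, Measure.integral_comp_mul_left (fun z => f (x - z / n) * Φ z),
          abs_inv, Nat.abs_cast, smul_eq_mul, mul_inv_cancel_left₀ hn']

theorem norm_min_le_of_nonneg {a : ℝ} (ha : 0 ≤ a) {c : ℝ} (hc : 0 ≤ c) : ‖min a c‖ ≤ c := by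
  rw [Real.norm_of_nonneg (le_min ha hc)]
  exact min_le_right a c

theorem Filter.Tendsto.min_of_tendsto_atTop {ι α : Type*} [LinearOrder α] [TopologicalSpace α]
    [OrderTopology α] [NoMaxOrder α] {l : Filter ι} {a b : ι → α} {c : α}
    (ha : Tendsto a l (𝓝 c)) (hb : Tendsto b l atTop) :
    Tendsto (fun i => min (a i) (b i)) l (𝓝 c) := by
  obtain ⟨d, hcd⟩ := exists_gt c
  refine ha.congr' ?_
  filter_upwards [ha.eventually (gt_mem_nhds hcd), hb.eventually (eventually_ge_atTop d)]
    with i had hbd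
  exact (min_eq_left (had.le.trans hbd)).symm

theorem norm_min_comp_sub_div_le {g : ℝ → ℝ} (hg0 : ∀ x, 0 ≤ g x) {x C : ℝ}
    (hC : ∀ y ∈ Metric.closedBall x 2, ‖g y‖ ≤ C) {n : ℕ} (hn : 1 ≤ n) {y : ℝ}
    (hy : dist y x < 1) (z : ℝ) : ‖min (g (y - z / n)) n‖ ≤ C + |z| := by
  have hC0 : 0 ≤ C := (norm_nonneg _).trans (hC x (Metric.mem_closedBall_self zero_le_two))
  have hnpos : (0 : ℝ) < n := by exact_mod_cast hn
  by_cases hz : |z| ≤ n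
  · have hzn : |z / n| ≤ 1 := by rwa [abs_div, Nat.abs_cast, div_le_one hnpos]
    have hmem : y - z / n ∈ Metric.closedBall x 2 := by
      rw [Real.dist_eq, abs_lt] at hy
      rw [abs_le] at hzn
      rw [Metric.mem_closedBall, Real.dist_eq, abs_le]
      constructor <;> linarith
    rw [Real.norm_of_nonneg (le_min (hg0 _) hnpos.le)]
    linarith [min_le_left (g (y - z / n)) n, Real.le_norm_self (g (y - z / n)), hC _ hmem,
      abs_nonneg z]
  · linarith [norm_min_le_of_nonneg (hg0 (y - z / n)) hnpos.le, not_le.1 hz]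

theorem tendsto_convol_min_moll {g : ℝ → ℝ} (hg : Continuous g) (hg0 : ∀ x, 0 ≤ g x)
    {Φ : SchwartzMap ℝ ℝ} (hΦ : IsMollifier Φ) (x : ℝ) :
    Tendsto (fun q : ℕ × ℝ => convol (fun y => min (g y) q.1) (moll Φ q.1) q.2)
      (atTop ×ˢ 𝓝 x) (𝓝 (g x)) := by
  obtain ⟨C, hC⟩ := (isCompact_closedBall x 2).exists_bound_of_continuousOn hg.continuousOn
  have hlim : ∫ z, g x * Φ z = g x := by rw [integral_const_mul, hΦ, mul_one]
  have hev : ∀ᶠ q : ℕ × ℝ in atTop ×ˢ 𝓝 x, 1 ≤ q.1 ∧ dist q.2 x < 1 :=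
    (eventually_ge_atTop 1).prod_mk (Metric.ball_mem_nhds x one_pos)
  rw [← hlim]
  refine Tendsto.congr' (hev.mono fun q hq => (convol_moll_eq _ Φ (by omega) q.2).symm) ?_
  refine tendsto_integral_filter_of_dominated_convergence (fun z => (C + |z|) * ‖Φ z‖) ?_ ?_ ?_ ?_
  · exact Eventually.of_forall fun q =>
      (((hg.comp (continuous_const.sub (continuous_id.div_const _))).min continuous_const).mul
        Φ.continuous).aestronglyMeasurable
  · filter_upwards [hev] with q ⟨hn, hy⟩
    refine Eventually.of_forall fun z => ?_
    rw [norm_mul]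
    gcongr
    exact norm_min_comp_sub_div_le hg0 hC hn hy z
  · refine (((Φ.integrable (μ := volume)).norm.const_mul C).add
      (Φ.integrable_pow_mul volume 1)).congr (Eventually.of_forall fun z => ?_)
    simp only [Pi.add_apply, pow_one, Real.norm_eq_abs]
    ring
  · refine Eventually.of_forall fun z => Tendsto.mul_const _ ?_
    have harg : Tendsto (fun q : ℕ × ℝ => q.2 - z / q.1) (atTop ×ˢ 𝓝 x) (𝓝 x) := by
      simpa using tendsto_snd.sub ((tendsto_const_div_atTop_nhds_zero_nat z).comp tendsto_fst)
    exact ((hg.tendsto x).comp harg).min_of_tendsto_atTop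
      (tendsto_natCast_atTop_atTop.comp tendsto_fst)

section Driftless

variable {τ : ℝ → ℝ}

theorem continuous_sigmaSqReg (hτ : Continuous τ) (Φ : SchwartzMap ℝ ℝ) (n : ℕ) :
    Continuous (sigmaSqReg τ Φ n) :=
  continuous_convol (by fun_prop)
    ⟨n, forall_mem_range.2 fun x => norm_min_le_of_nonneg (sq_nonneg _) n.cast_nonneg⟩
    (integrable_moll Φ n)

theorem tendsto_sigmaSqReg (hτ : Continuous τ) {Φ : SchwartzMap ℝ ℝ} (hΦ : IsMollifier Φ)
    (x : ℝ) :
    Tendsto (fun q : ℕ × ℝ => sigmaSqReg τ Φ q.1 q.2) (atTop ×ˢ 𝓝 x) (𝓝 (τ x ^ 2)) :=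
  tendsto_convol_min_moll (hτ.pow 2) (fun y => sq_nonneg (τ y)) hΦ x

theorem bReg_zero (Φ : SchwartzMap ℝ ℝ) (n : ℕ) : bReg (fun _ => 0) Φ n = fun _ => 0 := by
  funext x
  simp [bReg, convol]

theorem Lreg_zero_drift (Φ : SchwartzMap ℝ ℝ) (n : ℕ) (g : ℝ → ℝ) :
    Lreg τ (fun _ => 0) Φ n g = fun x => sigmaSqReg τ Φ n x / 2 * deriv (deriv g) x := by
  funext x
  simp [Lreg, bReg_zero]

theorem isC1GenSolution_of_contDiff_two (hτ : Continuous τ) {f : ℝ → ℝ} (hf : ContDiff ℝ 2 f) :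
    IsC1GenSolution τ (fun _ => 0) f (fun x => τ x ^ 2 / 2 * deriv (deriv f) x) := by
  have hf'' : Continuous (deriv (deriv f)) := hf.deriv'.continuous_deriv_one
  refine ⟨hf.of_le one_le_two, by fun_prop, fun Φ hΦ => ⟨fun _ => f, fun _ => hf, fun n => ?_,
    tendstoLocallyUniformly_const _ _, tendstoLocallyUniformly_const _ _, ?_⟩⟩
  · rw [Lreg_zero_drift]
    exact ((continuous_sigmaSqReg hτ Φ n).div_const 2).mul hf''
  · rw [tendstoLocallyUniformly_iff_tendsto_uncurry (by fun_prop)]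
    intro x
    simp only [Lreg_zero_drift]
    exact ((tendsto_sigmaSqReg hτ hΦ x).div_const 2).mul ((hf''.tendsto x).comp tendsto_snd)

theorem hasDerivAt_deriv_of_isC1GenSolution (hτ : Continuous τ) (hτpos : ∀ x, 0 < τ x)
    {f ℓ : ℝ → ℝ} (h : IsC1GenSolution τ (fun _ => 0) f ℓ) (x : ℝ) :
    HasDerivAt (deriv f) (2 * ℓ x / τ x ^ 2) x := by
  obtain ⟨-, hℓ, H⟩ := h
  obtain ⟨Φ, hΦ⟩ := exists_isMollifier
  obtain ⟨fn, hfn, -, -, hfn', hL⟩ := H Φ hΦ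
  rw [tendstoLocallyUniformly_iff_tendsto_uncurry hℓ] at hL
  have hfn'' : TendstoLocallyUniformly (fun n => deriv (deriv (fn n)))
      (fun x => 2 * ℓ x / τ x ^ 2) atTop := by
    refine (tendstoLocallyUniformly_iff_tendsto_uncurry ?_).2 fun y => ?_
    · exact (continuous_const.mul hℓ).div (hτ.pow 2) fun y => (pow_pos (hτpos y) 2).ne'
    have hσ := tendsto_sigmaSqReg hτ hΦ y
    refine ((tendsto_const_nhds.mul (hL y)).div hσ (pow_pos (hτpos y) 2).ne').congr' ?_
    filter_upwards [hσ.eventually_ne (pow_pos (hτpos y) 2).ne'] with q hq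
    simp only [Lreg_zero_drift, Pi.div_apply]
    field_simp
  exact hasDerivAt_of_tendstoUniformlyOnFilter (f := fun n => deriv (fn n))
    (tendstoLocallyUniformly_iff_filter.1 hfn'' x)
    (Eventually.of_forall fun q => ((hfn q.1).differentiable_deriv_two q.2).hasDerivAt)
    (Eventually.of_forall fun y => (tendstoLocallyUniformlyOn_univ.2 hfn').tendsto_at (mem_univ y))

theorem contDiff_two_of_isC1GenSolution (hτ : Continuous τ) (hτpos : ∀ x, 0 < τ x)
    {f ℓ : ℝ → ℝ} (h : IsC1GenSolution τ (fun _ => 0) f ℓ) : ContDiff ℝ 2 f := by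
  have hf'' := hasDerivAt_deriv_of_isC1GenSolution hτ hτpos h
  rw [show (2 : WithTop ℕ∞) = 1 + 1 from rfl, contDiff_succ_iff_deriv, contDiff_one_iff_deriv,
    show deriv (deriv f) = fun x => 2 * ℓ x / τ x ^ 2 from funext fun x => (hf'' x).deriv]
  exact ⟨h.1.differentiable one_ne_zero, by simp, fun x => (hf'' x).differentiableAt,
    (continuous_const.mul h.2.1).div (hτ.pow 2) fun x => (pow_pos (hτpos x) 2).ne'⟩

end Driftless

/-- Proposition 2.15(b): for a driftless operator `L⁰` with continuous positive
diffusion coefficient `τ`, `𝒟_{L⁰} = C²(ℝ)`, and for `f ∈ 𝒟_{L⁰}` one has `L⁰f = (τ²/2) f''`. -/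
theorem statement9 (τ : ℝ → ℝ) (hτc : Continuous τ) (hτpos : ∀ x, 0 < τ x) :
    (∀ f : ℝ → ℝ, (∃ ℓ : ℝ → ℝ, IsC1GenSolution τ (fun _ => 0) f ℓ) ↔ ContDiff ℝ 2 f) ∧
    (∀ f ℓ : ℝ → ℝ, IsC1GenSolution τ (fun _ => 0) f ℓ →
      ∀ x, ℓ x = τ x ^ 2 / 2 * deriv (deriv f) x) := by
  refine ⟨fun f => ⟨fun ⟨ℓ, h⟩ => contDiff_two_of_isC1GenSolution hτc hτpos h,
    fun hf => ⟨_, isC1GenSolution_of_contDiff_two hτc hf⟩⟩, fun f ℓ h x => ?_⟩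
  rw [(hasDerivAt_deriv_of_isC1GenSolution hτc hτpos h x).deriv]
  field_simp [(hτpos x).ne']

end
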